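/- arXiv:1810.07461 — 5 statements merged into one kernel-verified Lean document; each statement's English description precedes it below -/
import Mathlib

section
/- Center of mass normalization: let Ω ⊂ ℝⁿ be a bounded domain, v : Ω → ℝ nonnegative and integrable with ∫_Ω v dx > 0, and g : [0,∞) → ℝ continuous and nonnegative with ∫₀^∞ g(r) dr = ∞. Then there exists y ∈ ℝⁿ such that for each i = 1,…,n, ∫_{Ω−y} g(|x|)·(xᵢ/|x|)·v(x+y) dx = 0. -/
/-!
The point `y` is a global minimiser of the Lyapunov function
`L y = ∫_Ω F ‖y - x‖ v x`, where `F r = ∫₀^r g`. Since `F` is monotone and unbounded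
(`g` has divergent integral) and `∫_Ω v > 0`, `L` is continuous and tends to infinity at infinity,
so a minimiser exists. Along a line `t ↦ y + t • w` the integrand is locally Lipschitz in `t`
and differentiable at `t = 0` except at the single point `x = y`, so one may differentiate under
the integral sign; the derivative `∫_Ω g ‖y - x‖ ⟪y - x, w⟫ / ‖y - x‖ v x` vanishes at the
minimum, and translating by `y` gives the normalisation.
-/

open MeasureTheory Set Filter Metric
open scoped NNReal

noncomputable def radialPotential (G : ℝ → ℝ) (r : ℝ) : ℝ := ∫ t in (0 : ℝ)..r, G t

section RadialPotential

variable {G : ℝ → ℝ}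

theorem hasDerivAt_radialPotential (hG : Continuous G) (r : ℝ) :
    HasDerivAt (radialPotential G) (G r) r :=
  intervalIntegral.integral_hasDerivAt_right (hG.intervalIntegrable 0 r)
    hG.stronglyMeasurable.stronglyMeasurableAtFilter hG.continuousAt

theorem continuous_radialPotential (hG : Continuous G) : Continuous (radialPotential G) :=
  continuous_iff_continuousAt.2 fun r => (hasDerivAt_radialPotential hG r).continuousAt

theorem monotone_radialPotential (hG : Continuous G) (hG₀ : ∀ r, 0 ≤ G r) :
    Monotone (radialPotential G) :=
  monotone_of_deriv_nonneg (fun r => (hasDerivAt_radialPotential hG r).differentiableAt)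
    fun r => (hasDerivAt_radialPotential hG r).deriv ▸ hG₀ r

theorem radialPotential_nonneg (hG₀ : ∀ r, 0 ≤ G r) {r : ℝ} (hr : 0 ≤ r) :
    0 ≤ radialPotential G r :=
  intervalIntegral.integral_nonneg hr fun t _ => hG₀ t

theorem tendsto_radialPotential_atTop (hG : Continuous G) (hG₀ : ∀ r, 0 ≤ G r)
    (hdiv : ∫⁻ r in Ioi (0 : ℝ), ENNReal.ofReal (G r) = ⊤) :
    Tendsto (radialPotential G) atTop atTop := by
  have hcover : AECover (volume.restrict (Ioi (0 : ℝ))) atTop Iic := aecover_Iic tendsto_id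
  have hlim := hcover.lintegral_tendsto_of_countably_generated
    (f := fun r => ENNReal.ofReal (G r)) (by fun_prop)
  rw [hdiv] at hlim
  refine ENNReal.tendsto_ofReal_nhds_top.1 (hlim.congr' ?_)
  filter_upwards [eventually_ge_atTop 0] with r hr
  rw [Measure.restrict_restrict measurableSet_Iic, Iic_inter_Ioi, radialPotential,
    intervalIntegral.integral_of_le hr, ofReal_integral_eq_lintegral_ofReal
      (hG.integrableOn_Icc.mono_set Ioc_subset_Icc_self) (Eventually.of_forall hG₀)]

theorem lipschitzOnWith_radialPotential (hG : Continuous G) {s : Set ℝ} (hs : Convex ℝ s)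
    {C : ℝ≥0} (hC : ∀ r ∈ s, ‖G r‖₊ ≤ C) : LipschitzOnWith C (radialPotential G) s :=
  hs.lipschitzOnWith_of_nnnorm_hasDerivWithin_le
    (fun r _ => (hasDerivAt_radialPotential hG r).hasDerivWithinAt) hC

end RadialPotential

section NormLine

variable {E : Type*} [NormedAddCommGroup E] {G : ℝ → ℝ} {x y w : E}

theorem norm_radialPotential_mul_le (hG : Continuous G) (hG₀ : ∀ r, 0 ≤ G r) {v : E → ℝ}
    (hv : ∀ x, 0 ≤ v x) {B M : ℝ} (hy : ‖y‖ ≤ B) (hx : ‖x‖ ≤ M) :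
    ‖radialPotential G ‖y - x‖ * v x‖ ≤ radialPotential G (B + M) * v x := by
  rw [norm_mul, Real.norm_of_nonneg (radialPotential_nonneg hG₀ (norm_nonneg _)),
    Real.norm_of_nonneg (hv x)]
  exact mul_le_mul_of_nonneg_right
    (monotone_radialPotential hG hG₀ ((norm_sub_le y x).trans (add_le_add hy hx))) (hv x)

theorem lipschitzOnWith_radialPotential_line_mul [NormedSpace ℝ E] (hG : Continuous G)
    {C : ℝ≥0} {B : ℝ} (hC : ∀ r ∈ Icc 0 B, ‖G r‖₊ ≤ C) {s : Set ℝ}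
    (hs : ∀ t ∈ s, ‖y + t • w - x‖ ≤ B) (c : ℝ) :
    LipschitzOnWith (Real.nnabs (C * ‖w‖ * c))
      (fun t => radialPotential G ‖y + t • w - x‖ * c) s := by
  have hF := lipschitzOnWith_radialPotential hG (convex_Icc 0 B) hC
  refine LipschitzOnWith.of_dist_le_mul fun t ht τ hτ => ?_
  have hdist := hF.dist_le_mul _ ⟨norm_nonneg _, hs t ht⟩ _ ⟨norm_nonneg _, hs τ hτ⟩
  have hnorm : |‖y + t • w - x‖ - ‖y + τ • w - x‖| ≤ ‖w‖ * |t - τ| := by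
    refine (abs_norm_sub_norm_le _ _).trans_eq ?_
    rw [show y + t • w - x - (y + τ • w - x) = (t - τ) • w by module, norm_smul,
      Real.norm_eq_abs, mul_comm]
  simp only [Real.dist_eq] at hdist
  rw [Real.dist_eq, Real.dist_eq, Real.coe_nnabs, ← sub_mul, abs_mul, abs_mul, abs_mul,
    abs_of_nonneg (norm_nonneg w), NNReal.abs_eq]
  calc |radialPotential G ‖y + t • w - x‖ - radialPotential G ‖y + τ • w - x‖| * |c|
      ≤ C * (‖w‖ * |t - τ|) * |c| := by gcongr; exact hdist.trans (by gcongr)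
    _ = C * ‖w‖ * |c| * |t - τ| := by ring

theorem hasDerivAt_norm_add_smul [InnerProductSpace ℝ E] (hxy : y ≠ x) (w : E) :
    HasDerivAt (fun t : ℝ => ‖y + t • w - x‖) (inner ℝ (y - x) w / ‖y - x‖) 0 := by
  have hline : HasDerivAt (fun t : ℝ => y + t • w - x) w 0 := by
    simpa using (((hasDerivAt_id (0 : ℝ)).smul_const w).const_add y).sub_const x
  have := hline.norm_sq.sqrt (by simpa [sub_eq_zero] using hxy)
  simp only [zero_smul, add_zero, Real.sqrt_sq (norm_nonneg _)] at this
  convert this using 1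
  field_simp

end NormLine

section Lyapunov

variable {E : Type*} [NormedAddCommGroup E] [MeasurableSpace E] [BorelSpace E]
  {μ : Measure E} {G : ℝ → ℝ} {Ω : Set E} {v : E → ℝ} {M : ℝ}

noncomputable def lyapunov (G : ℝ → ℝ) (μ : Measure E) (Ω : Set E) (v : E → ℝ) (y : E) : ℝ :=
  ∫ x in Ω, radialPotential G ‖y - x‖ * v x ∂μ

theorem ae_restrict_norm_le (hΩ : Ω ⊆ closedBall 0 M) : ∀ᵐ x ∂μ.restrict Ω, ‖x‖ ≤ M :=
  ae_restrict_of_ae_restrict_of_subset hΩ <|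
    (ae_restrict_mem measurableSet_closedBall).mono fun x hx => by simpa using hx

theorem integrable_radialPotential_mul (hG : Continuous G) (hG₀ : ∀ r, 0 ≤ G r)
    (hv : ∀ x, 0 ≤ v x) (hvint : IntegrableOn v Ω μ) (hΩ : Ω ⊆ closedBall 0 M) (y : E) :
    Integrable (fun x => radialPotential G ‖y - x‖ * v x) (μ.restrict Ω) :=
  (hvint.const_mul (radialPotential G (‖y‖ + M))).mono'
    (((continuous_radialPotential hG).comp (continuous_const.sub continuous_id).norm
      ).aestronglyMeasurable.mul hvint.aestronglyMeasurable)
    ((ae_restrict_norm_le hΩ).mono fun _ hx => norm_radialPotential_mul_le hG hG₀ hv le_rfl hx)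

theorem continuous_lyapunov (hG : Continuous G) (hG₀ : ∀ r, 0 ≤ G r) (hv : ∀ x, 0 ≤ v x)
    (hvint : IntegrableOn v Ω μ) (hΩ : Ω ⊆ closedBall 0 M) : Continuous (lyapunov G μ Ω v) := by
  refine continuous_iff_continuousAt.2 fun y₀ => continuousAt_of_dominated
    (Eventually.of_forall fun y =>
      (integrable_radialPotential_mul hG hG₀ hv hvint hΩ y).aestronglyMeasurable)
    ?_ (hvint.const_mul (radialPotential G (‖y₀‖ + 1 + M)))
    (Eventually.of_forall fun x => (((continuous_radialPotential hG).comp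
      (continuous_id.sub continuous_const).norm).mul continuous_const).continuousAt)
  filter_upwards [ball_mem_nhds y₀ one_pos] with y hy
  refine (ae_restrict_norm_le hΩ).mono fun x hx => norm_radialPotential_mul_le hG hG₀ hv ?_ hx
  have := norm_le_norm_add_norm_sub' y y₀
  rw [mem_ball_iff_norm] at hy
  linarith

theorem tendsto_lyapunov_cocompact [ProperSpace E] (hG : Continuous G) (hG₀ : ∀ r, 0 ≤ G r)
    (hdiv : ∫⁻ r in Ioi (0 : ℝ), ENNReal.ofReal (G r) = ⊤) (hv : ∀ x, 0 ≤ v x)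
    (hvint : IntegrableOn v Ω μ) (hΩ : Ω ⊆ closedBall 0 M) (hvpos : 0 < ∫ x in Ω, v x ∂μ) :
    Tendsto (lyapunov G μ Ω v) (cocompact E) atTop := by
  have hlower : ∀ z, radialPotential G (‖z‖ - M) * ∫ x in Ω, v x ∂μ ≤ lyapunov G μ Ω v z := by
    intro z
    rw [← integral_const_mul]
    refine integral_mono_ae (hvint.const_mul _)
      (integrable_radialPotential_mul hG hG₀ hv hvint hΩ z) ?_
    filter_upwards [ae_restrict_norm_le hΩ] with x hx
    refine mul_le_mul_of_nonneg_right (monotone_radialPotential hG hG₀ ?_) (hv x)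
    linarith [norm_sub_norm_le z x]
  refine tendsto_atTop_mono hlower (Tendsto.atTop_mul_const hvpos ?_)
  exact (tendsto_radialPotential_atTop hG hG₀ hdiv).comp
    (tendsto_atTop_add_const_right _ (-M) tendsto_norm_cocompact_atTop)

variable [InnerProductSpace ℝ E] [NullSingletonClass μ]

theorem hasDerivAt_lyapunov_line (hG : Continuous G) (hG₀ : ∀ r, 0 ≤ G r) (hv : ∀ x, 0 ≤ v x)
    (hvint : IntegrableOn v Ω μ) (hΩ : Ω ⊆ closedBall 0 M) (y w : E) :
    HasDerivAt (fun t : ℝ => lyapunov G μ Ω v (y + t • w))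
      (∫ x in Ω, G ‖y - x‖ * (inner ℝ (y - x) w / ‖y - x‖) * v x ∂μ) 0 := by
  set B := ‖y‖ + ‖w‖ + M
  obtain ⟨C, hC⟩ := (isCompact_Icc (a := 0) (b := B)).exists_bound_of_continuousOn hG.continuousOn
  have hC' : ∀ r ∈ Icc 0 B, ‖G r‖₊ ≤ C.toNNReal := fun r hr => by
    rw [← NNReal.coe_le_coe, coe_nnnorm]
    exact (hC r hr).trans (Real.le_coe_toNNReal C)
  have hline : ∀ x, ‖x‖ ≤ M → ∀ t ∈ ball (0 : ℝ) 1, ‖y + t • w - x‖ ≤ B := by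
    intro x hx t ht
    have hsmul : ‖t • w‖ ≤ ‖w‖ := by
      rw [norm_smul]
      exact mul_le_of_le_one_left (norm_nonneg w) (by simpa using (mem_ball_zero_iff.1 ht).le)
    linarith [norm_sub_le (y + t • w) x, norm_add_le y (t • w)]
  have hne : ∀ᵐ x ∂μ.restrict Ω, x ≠ y :=
    ae_restrict_of_ae (measure_eq_zero_iff_ae_notMem.1 (measure_singleton y))
  refine (hasDerivAt_integral_of_dominated_loc_of_lip (ball_mem_nhds 0 one_pos)
    (Eventually.of_forall fun t =>
      (integrable_radialPotential_mul hG hG₀ hv hvint hΩ (y + t • w)).aestronglyMeasurable)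
    (by simpa using integrable_radialPotential_mul hG hG₀ hv hvint hΩ y)
    ((by fun_prop : Measurable fun x => G ‖y - x‖ * (inner ℝ (y - x) w / ‖y - x‖)
      ).aestronglyMeasurable.mul hvint.aestronglyMeasurable)
    ((ae_restrict_norm_le hΩ).mono fun x hx =>
      lipschitzOnWith_radialPotential_line_mul hG hC' (hline x hx) (v x))
    (hvint.const_mul _) ?_).2
  filter_upwards [hne] with x hx
  exact (((hasDerivAt_radialPotential hG _).comp 0 (hasDerivAt_norm_add_smul hx.symm w)).mul_const
    (v x)).congr_deriv (by simp)

theorem integral_radial_inner_eq_zero_of_forall_lyapunov_le (hG : Continuous G) (hG₀ : ∀ r, 0 ≤ G r)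
    (hv : ∀ x, 0 ≤ v x) (hvint : IntegrableOn v Ω μ) (hΩ : Ω ⊆ closedBall 0 M) {y : E}
    (hy : ∀ z, lyapunov G μ Ω v y ≤ lyapunov G μ Ω v z) (w : E) :
    ∫ x in Ω, G ‖y - x‖ * (inner ℝ (y - x) w / ‖y - x‖) * v x ∂μ = 0 :=
  IsLocalMin.hasDerivAt_eq_zero (Eventually.of_forall fun t => by simpa using hy (y + t • w))
    (hasDerivAt_lyapunov_line hG hG₀ hv hvint hΩ y w)

theorem exists_integral_radial_inner_preimage_add_eq_zero [ProperSpace E] [μ.IsAddRightInvariant]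
    (hG : Continuous G) (hG₀ : ∀ r, 0 ≤ G r)
    (hdiv : ∫⁻ r in Ioi (0 : ℝ), ENNReal.ofReal (G r) = ⊤) (hv : ∀ x, 0 ≤ v x)
    (hvint : IntegrableOn v Ω μ) (hΩ : Bornology.IsBounded Ω) (hvpos : 0 < ∫ x in Ω, v x ∂μ) :
    ∃ y, ∀ w, ∫ x in (· + y) ⁻¹' Ω, G ‖x‖ * (inner ℝ x w / ‖x‖) * v (x + y) ∂μ = 0 := by
  obtain ⟨M, hM⟩ := hΩ.subset_closedBall 0
  obtain ⟨y, hy⟩ := (continuous_lyapunov hG hG₀ hv hvint hM).exists_forall_le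
    (tendsto_lyapunov_cocompact hG hG₀ hdiv hv hvint hM hvpos)
  refine ⟨y, fun w => ?_⟩
  set φ : E → ℝ := fun u => G ‖y - u‖ * (inner ℝ (y - u) (-w) / ‖y - u‖) * v u
  calc ∫ x in (· + y) ⁻¹' Ω, G ‖x‖ * (inner ℝ x w / ‖x‖) * v (x + y) ∂μ
      = ∫ x in (· + y) ⁻¹' Ω, φ (x + y) ∂μ := by simp [φ]
    _ = ∫ u in Ω, φ u ∂μ := (measurePreserving_add_right μ y).setIntegral_preimage_emb
      (measurableEmbedding_addRight y) φ Ω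
    _ = 0 := integral_radial_inner_eq_zero_of_forall_lyapunov_le hG hG₀ hv hvint hM hy (-w)

end Lyapunov

theorem center_of_mass_normalization_general (n : ℕ)
    (Ω : Set (EuclideanSpace ℝ (Fin n)))
    (hΩbdd : Bornology.IsBounded Ω)
    (v : EuclideanSpace ℝ (Fin n) → ℝ) (hv : ∀ x, 0 ≤ v x)
    (hvint : IntegrableOn v Ω volume) (hvpos : 0 < ∫ x in Ω, v x)
    (g : ℝ → ℝ) (hg : ContinuousOn g (Set.Ici 0)) (hgnn : ∀ r : ℝ, 0 ≤ r → 0 ≤ g r)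
    (hgdiv : ∫⁻ r in Set.Ioi (0 : ℝ), ENNReal.ofReal (g r) = ⊤) :
    ∃ y : EuclideanSpace ℝ (Fin n), ∀ i : Fin n,
      ∫ x in {x : EuclideanSpace ℝ (Fin n) | x + y ∈ Ω},
        g ‖x‖ * (x i / ‖x‖) * v (x + y) = 0 := by
  rcases isEmpty_or_nonempty (Fin n) with _ | _
  · exact ⟨0, fun i => isEmptyElim i⟩
  set G : ℝ → ℝ := fun r => g (max r 0)
  have hG : Continuous G :=
    hg.comp_continuous (continuous_id.max continuous_const) fun r => le_max_right r 0
  have hGdiv : ∫⁻ r in Ioi (0 : ℝ), ENNReal.ofReal (G r) = ⊤ := by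
    rw [← hgdiv]
    exact setLIntegral_congr_fun measurableSet_Ioi fun r (hr : 0 < r) => by simp [G, hr.le]
  obtain ⟨y, hy⟩ := exists_integral_radial_inner_preimage_add_eq_zero hG
    (fun r => hgnn _ (le_max_right r 0)) hGdiv hv hvint hΩbdd hvpos
  refine ⟨y, fun i => ?_⟩
  show ∫ x in (· + y) ⁻¹' Ω, g ‖x‖ * (x i / ‖x‖) * v (x + y) = 0
  simpa [G, EuclideanSpace.inner_single_right] using hy (EuclideanSpace.single i 1)

theorem center_of_mass_normalization (n : ℕ) (hn : 2 ≤ n)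
    (Ω : Set (EuclideanSpace ℝ (Fin n))) (hΩmeas : MeasurableSet Ω)
    (hΩbdd : Bornology.IsBounded Ω)
    (v : EuclideanSpace ℝ (Fin n) → ℝ) (hv : ∀ x, 0 ≤ v x)
    (hvint : IntegrableOn v Ω volume) (hvpos : 0 < ∫ x in Ω, v x)
    (g : ℝ → ℝ) (hg : ContinuousOn g (Set.Ici 0)) (hgnn : ∀ r : ℝ, 0 ≤ r → 0 ≤ g r)
    (hgdiv : ∫⁻ r in Set.Ioi (0 : ℝ), ENNReal.ofReal (g r) = ⊤) :
    ∃ y : EuclideanSpace ℝ (Fin n), ∀ i : Fin n,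
      ∫ x in {x : EuclideanSpace ℝ (Fin n) | x + y ∈ Ω},
        g ‖x‖ * (x i / ‖x‖) * v (x + y) = 0 :=
  center_of_mass_normalization_general n Ω hΩbdd v hv hvint hvpos g hg hgnn hgdiv
end

section
/- For ν ≥ 0, the function r ↦ r·I_ν′(r)/I_ν(r) is strictly increasing on (0,∞), tends to ν as r → 0⁺, and tends to ∞ as r → ∞, where I_ν is the modified Bessel function of the first kind. -/
/-!
For `r > 0` we have `I_ν(r) = (r/2)^ν P((r/2)^2)` with `P(u) = ∑ u^k / (k! Γ(ν+k+1))`, an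
entire power series with positive coefficients, so `r I_ν'(r) / I_ν(r) = ν + 2 u P'(u) / P(u)`
at `u = (r/2)^2`. For any such series `P = ∑ c_k u^k`, with `Q = u P' = ∑ k c_k u^k`, the cross
difference `Q(t) P(s) - Q(s) P(t)` is a double series whose symmetrization is
`½ ∑ c_j c_k (j - k) (t^j s^k - s^j t^k)`, a sum of nonnegative terms, positive for
`(j, k) = (1, 0)`; hence `Q/P` is strictly increasing on `[0, ∞)`. It is continuous with value
`0` at `0`, and it tends to `∞` because `Q/P ≥ m (1 - ∑_{k<m} c_k u^k / P(u))` for every `m`,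
where the quotient tends to `0` as `u → ∞`.
-/

/-- Modified Bessel function of the first kind,
`I ν x = ∑_{k≥0} (x/2)^(ν+2k) / (k! Γ(ν+k+1))`. -/
noncomputable def besselI (ν x : ℝ) : ℝ :=
  ∑' k : ℕ, (x / 2) ^ (ν + 2 * (k : ℝ)) / (Nat.factorial k * Real.Gamma (ν + k + 1))

open Filter Finset Real Set Topology Nat

theorem Summable.tsum_pos_of_add_swap {α : Type*} {F : α × α → ℝ} (hF : Summable F)
    (hnonneg : ∀ p : α × α, 0 ≤ F p + F p.swap) (p₀ : α × α)
    (hp₀ : 0 < F p₀ + F p₀.swap) :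
    0 < ∑' p, F p := by
  have hswap : Summable fun p : α × α => F p.swap := hF.prod_symm
  have htwice : ∑' p : α × α, (F p + F p.swap) = 2 * ∑' p, F p := by
    rw [hF.tsum_add hswap, show ∑' p : α × α, F p.swap = ∑' p, F p from
      (Equiv.prodComm α α).tsum_eq F]
    ring
  linarith [(hF.add hswap).tsum_pos hnonneg p₀ hp₀]

theorem natCast_sub_mul_pow_sub_nonneg {s t : ℝ} (hs : 0 ≤ s) (hst : s ≤ t) (j k : ℕ) :
    0 ≤ ((j : ℝ) - k) * (t ^ j * s ^ k - s ^ j * t ^ k) := by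
  have hshift (i m : ℕ) : 0 ≤ t ^ (i + m) * s ^ i - s ^ (i + m) * t ^ i := by
    have hst_pow : s ^ m ≤ t ^ m := pow_le_pow_left₀ hs hst m
    have hts : 0 ≤ (t * s) ^ i := pow_nonneg (mul_nonneg (hs.trans hst) hs) i
    calc 0 ≤ (t * s) ^ i * (t ^ m - s ^ m) := mul_nonneg hts (sub_nonneg.2 hst_pow)
      _ = _ := by ring
  rcases le_total k j with h | h
  · obtain ⟨m, rfl⟩ := Nat.exists_eq_add_of_le h
    exact mul_nonneg (by push_cast; linarith) (hshift k m)
  · obtain ⟨m, rfl⟩ := Nat.exists_eq_add_of_le h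
    exact mul_nonneg_of_nonpos_of_nonpos (by push_cast; linarith) (by linarith [hshift j m])

section PowerSeries

variable {c : ℕ → ℝ}

theorem summable_mul_pow_of_tendsto_ratio (hc : ∀ k, c k ≠ 0)
    (hratio : Tendsto (fun k => c (k + 1) / c k) atTop (𝓝 0)) (x : ℝ) :
    Summable fun k => c k * x ^ k := by
  rcases eq_or_ne x 0 with rfl | hx
  · exact summable_of_ne_finset_zero (s := {0}) fun k hk => by simp_all
  refine summable_of_ratio_test_tendsto_lt_one zero_lt_one
    (Eventually.of_forall fun k => mul_ne_zero (hc k) (pow_ne_zero k hx)) ?_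
  have hnorm (k : ℕ) :
      ‖c (k + 1) * x ^ (k + 1)‖ / ‖c k * x ^ k‖ = ‖c (k + 1) / c k‖ * ‖x‖ := by
    have : ‖x‖ ≠ 0 := norm_ne_zero_iff.2 hx
    have : ‖c k‖ ≠ 0 := norm_ne_zero_iff.2 (hc k)
    simp only [norm_mul, norm_div, norm_pow, pow_succ]
    field_simp
  convert hratio.norm.mul_const ‖x‖ using 1
  · exact funext hnorm
  · rw [norm_zero, zero_mul]

/-- `x P'(x) / P(x)` for `P x = ∑ c k * x ^ k`, by `mul_deriv_tsum_mul_pow`. -/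
noncomputable def powerSeriesLogDeriv (c : ℕ → ℝ) (x : ℝ) : ℝ :=
  (∑' k, (k * c k) * x ^ k) / ∑' k, c k * x ^ k

theorem powerSeriesLogDeriv_zero : powerSeriesLogDeriv c 0 = 0 := by
  rw [powerSeriesLogDeriv, div_eq_zero_iff]
  refine .inl ((tsum_congr fun k => ?_).trans tsum_zero)
  rcases k with _ | k <;> simp

variable (hc : ∀ x, Summable fun k => c k * x ^ k)
include hc

theorem summable_natCast_mul_mul_pow (x : ℝ) : Summable fun k => (k * c k) * x ^ k := by
  refine Summable.of_norm_bounded (hc (2 * x)).abs fun k => ?_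
  calc ‖(k * c k) * x ^ k‖ = k * |c k * x ^ k| := by
        rw [Real.norm_eq_abs, mul_assoc, abs_mul, Nat.abs_cast]
    _ ≤ 2 ^ k * |c k * x ^ k| := by gcongr; exact_mod_cast Nat.lt_two_pow_self.le
    _ = |c k * (2 * x) ^ k| := by
        simp only [mul_pow, abs_mul, abs_pow, abs_two]; ring

theorem hasDerivAt_tsum_mul_pow (x : ℝ) :
    HasDerivAt (fun y => ∑' k, c k * y ^ k) (∑' k, (k * c k) * x ^ (k - 1)) x := by
  set R := |x| + 1
  have hR : 1 ≤ R := le_add_of_nonneg_left (abs_nonneg x)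
  refine hasDerivAt_tsum_of_isPreconnected (g := fun k y => c k * y ^ k)
    (g' := fun k y => (k * c k) * y ^ (k - 1)) (summable_natCast_mul_mul_pow hc R).abs
    Metric.isOpen_ball (convex_ball 0 R).isPreconnected
    (fun k y _ => by
      simpa only [mul_left_comm, mul_assoc] using (hasDerivAt_pow k y).const_mul (c k)) ?_
    (Metric.mem_ball_self (by linarith)) (hc 0) (by simp [R])
  intro k y hy
  have hyR : |y| ≤ R := by simpa [Real.dist_eq] using (Metric.mem_ball.1 hy).le
  calc ‖(k * c k) * y ^ (k - 1)‖ = |k * c k| * |y| ^ (k - 1) := by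
        rw [Real.norm_eq_abs, abs_mul, abs_pow]
    _ ≤ |k * c k| * R ^ k := by
        gcongr
        exact (pow_le_pow_left₀ (abs_nonneg y) hyR _).trans
          (pow_le_pow_right₀ hR (Nat.sub_le k 1))
    _ = |(k * c k) * R ^ k| := by rw [abs_mul (_ * _), abs_pow, abs_of_pos (by linarith : 0 < R)]

theorem mul_deriv_tsum_mul_pow (x : ℝ) :
    x * deriv (fun y => ∑' k, c k * y ^ k) x = ∑' k, (k * c k) * x ^ k := by
  rw [(hasDerivAt_tsum_mul_pow hc x).deriv, ← tsum_mul_left]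
  refine tsum_congr fun k => ?_
  rcases k with _ | k
  · simp
  · rw [Nat.add_sub_cancel, pow_succ]; ring

theorem natCast_mul_sub_sum_range_le (hnonneg : ∀ k, 0 ≤ c k) {x : ℝ} (hx : 0 ≤ x)
    (m : ℕ) :
    m * (∑' k, c k * x ^ k - ∑ k ∈ range m, c k * x ^ k) ≤ ∑' k, (k * c k) * x ^ k := by
  rw [← (hc x).sum_add_tsum_nat_add m, add_sub_cancel_left, ← tsum_mul_left]
  refine (((summable_nat_add_iff m).2 (hc x)).mul_left (m : ℝ)).tsum_le_tsum_of_inj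
    (· + m) (add_left_injective m)
    (fun k _ => mul_nonneg (mul_nonneg k.cast_nonneg (hnonneg k)) (pow_nonneg hx k)) (fun k => ?_)
    (summable_natCast_mul_mul_pow hc x)
  have : (m : ℝ) ≤ ↑(k + m) := by norm_cast; omega
  have : 0 ≤ c (k + m) * x ^ (k + m) := by have := hnonneg (k + m); positivity
  rw [mul_assoc]
  gcongr

theorem continuousAt_powerSeriesLogDeriv {x : ℝ} (hx : ∑' k, c k * x ^ k ≠ 0) :
    ContinuousAt (powerSeriesLogDeriv c) x :=
  (hasDerivAt_tsum_mul_pow (summable_natCast_mul_mul_pow hc) x).continuousAt.div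
    (hasDerivAt_tsum_mul_pow hc x).continuousAt hx

variable (hpos : ∀ k, 0 < c k)
include hpos

theorem tsum_mul_pow_pos {x : ℝ} (hx : 0 ≤ x) : 0 < ∑' k, c k * x ^ k :=
  (hc x).tsum_pos (fun k => by have := hpos k; positivity) 0 (by simpa using hpos 0)

theorem tsum_natCast_mul_mul_pow_mul_tsum_lt {s t : ℝ} (hs : 0 ≤ s) (hst : s < t) :
    (∑' k, (k * c k) * s ^ k) * ∑' k, c k * t ^ k
      < (∑' k, (k * c k) * t ^ k) * ∑' k, c k * s ^ k := by
  have hQ := summable_natCast_mul_mul_pow hc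
  have habs {d : ℕ → ℝ} (hd : ∀ x, Summable fun k => d k * x ^ k) (x : ℝ) :
      Summable fun k => ‖d k * x ^ k‖ := (hd x).abs
  rw [← sub_pos, tsum_mul_tsum_of_summable_norm (habs hQ t) (habs hc s),
    tsum_mul_tsum_of_summable_norm (habs hQ s) (habs hc t),
    ← (summable_mul_of_summable_norm (habs hQ t) (habs hc s)).tsum_sub
      (summable_mul_of_summable_norm (habs hQ s) (habs hc t))]
  refine Summable.tsum_pos_of_add_swap
    ((summable_mul_of_summable_norm (habs hQ t) (habs hc s)).sub
      (summable_mul_of_summable_norm (habs hQ s) (habs hc t))) (fun p => ?_) (1, 0) ?_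
  · have := natCast_sub_mul_pow_sub_nonneg hs hst.le p.1 p.2
    have := mul_pos (hpos p.1) (hpos p.2)
    calc 0 ≤ c p.1 * c p.2 * (((p.1 : ℝ) - p.2) * (t ^ p.1 * s ^ p.2 - s ^ p.1 * t ^ p.2)) := by
          positivity
      _ = _ := by simp only [Prod.fst_swap, Prod.snd_swap]; ring
  · have := mul_pos (hpos 1) (hpos 0)
    simp only [Prod.swap_prod_mk]
    push_cast
    nlinarith

theorem strictMonoOn_powerSeriesLogDeriv : StrictMonoOn (powerSeriesLogDeriv c) (Ici 0) :=
  fun s hs t ht hst => by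
    rw [powerSeriesLogDeriv, powerSeriesLogDeriv,
      div_lt_div_iff₀ (tsum_mul_pow_pos hc hpos hs) (tsum_mul_pow_pos hc hpos ht)]
    exact tsum_natCast_mul_mul_pow_mul_tsum_lt hc hpos hs hst

theorem tendsto_sum_range_div_tsum_mul_pow_atTop (m : ℕ) :
    Tendsto (fun x => (∑ k ∈ range m, c k * x ^ k) / ∑' k, c k * x ^ k) atTop (𝓝 0) := by
  have hlower :
      ∀ᶠ x in atTop, 0 ≤ (∑ k ∈ range m, c k * x ^ k) / ∑' k, c k * x ^ k := by
    filter_upwards [eventually_ge_atTop 0] with x hx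
    have := tsum_mul_pow_pos hc hpos hx
    exact div_nonneg (sum_nonneg fun k _ => by have := hpos k; positivity) this.le
  have hupper : ∀ᶠ x in atTop, (∑ k ∈ range m, c k * x ^ k) / ∑' k, c k * x ^ k
      ≤ ∑ k ∈ range m, c k / c m * (x ^ k / x ^ m) := by
    filter_upwards [eventually_gt_atTop 0] with x hx
    have hm : 0 < c m * x ^ m := by have := hpos m; positivity
    have hle : c m * x ^ m ≤ ∑' k, c k * x ^ k :=
      (hc x).le_tsum m fun k _ => by have := hpos k; positivity
    calc (∑ k ∈ range m, c k * x ^ k) / ∑' k, c k * x ^ k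
        ≤ (∑ k ∈ range m, c k * x ^ k) / (c m * x ^ m) := by
          gcongr
          exact sum_nonneg fun k _ => by have := hpos k; positivity
      _ = ∑ k ∈ range m, c k / c m * (x ^ k / x ^ m) := by
          rw [sum_div]
          exact sum_congr rfl fun k _ => mul_div_mul_comm _ _ _ _
  have hlim :
      Tendsto (fun x : ℝ => ∑ k ∈ range m, c k / c m * (x ^ k / x ^ m)) atTop (𝓝 0) := by
    simpa using tendsto_finsetSum (range m) fun k hk =>
      (tendsto_pow_div_pow_atTop_zero (mem_range.1 hk)).const_mul (c k / c m)
  exact tendsto_of_tendsto_of_tendsto_of_le_of_le' tendsto_const_nhds hlim hlower hupper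

theorem tendsto_powerSeriesLogDeriv_atTop : Tendsto (powerSeriesLogDeriv c) atTop atTop := by
  refine tendsto_atTop.2 fun b => ?_
  obtain ⟨m, hm⟩ := exists_nat_ge (2 * b)
  filter_upwards [eventually_ge_atTop 0,
    (tendsto_sum_range_div_tsum_mul_pow_atTop hc hpos m).eventually (gt_mem_nhds one_half_pos)]
    with x hx hhead
  have hP := tsum_mul_pow_pos hc hpos hx
  have htail := natCast_mul_sub_sum_range_le hc (fun k => (hpos k).le) hx m
  rw [div_lt_iff₀ hP] at hhead
  rw [powerSeriesLogDeriv, le_div_iff₀ hP]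
  nlinarith

end PowerSeries

section Bessel

variable {ν : ℝ}

noncomputable def besselCoeff (ν : ℝ) (k : ℕ) : ℝ := ((k ! : ℝ) * Gamma (ν + k + 1))⁻¹

theorem besselCoeff_pos (hν : -1 < ν) (k : ℕ) : 0 < besselCoeff ν k := by
  have := Gamma_pos_of_pos (by linarith [k.cast_nonneg (α := ℝ)] : 0 < ν + k + 1)
  unfold besselCoeff
  positivity

theorem besselCoeff_succ_div (hν : -1 < ν) (k : ℕ) :
    besselCoeff ν (k + 1) / besselCoeff ν k = ((k + 1) * (ν + k + 1))⁻¹ := by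
  have hΓ : Gamma (ν + ↑(k + 1) + 1) = (ν + k + 1) * Gamma (ν + k + 1) := by
    rw [Nat.cast_succ, ← add_assoc, Gamma_add_one (by linarith [k.cast_nonneg (α := ℝ)])]
  have := Gamma_pos_of_pos (by linarith [k.cast_nonneg (α := ℝ)] : 0 < ν + k + 1)
  rw [besselCoeff, besselCoeff, hΓ, factorial_succ]
  push_cast
  field_simp

theorem summable_besselCoeff_mul_pow (hν : -1 < ν) (x : ℝ) :
    Summable fun k => besselCoeff ν k * x ^ k := by
  refine summable_mul_pow_of_tendsto_ratio (fun k => (besselCoeff_pos hν k).ne') ?_ x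
  simp only [besselCoeff_succ_div hν]
  refine tendsto_inv_atTop_zero.comp (Tendsto.atTop_mul_atTop₀ ?_ ?_)
  · exact tendsto_atTop_add_const_right _ 1 tendsto_natCast_atTop_atTop
  · exact tendsto_atTop_add_const_right _ 1
      (tendsto_atTop_add_const_left _ ν tendsto_natCast_atTop_atTop)

theorem besselI_eq_rpow_mul_tsum {x : ℝ} (hx : 0 < x) :
    besselI ν x = (x / 2) ^ ν * ∑' k, besselCoeff ν k * ((x / 2) ^ 2) ^ k := by
  rw [besselI, ← tsum_mul_left]
  refine tsum_congr fun k => ?_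
  rw [rpow_add (by positivity), show 2 * (k : ℝ) = ((2 * k : ℕ) : ℝ) by push_cast; ring,
    rpow_natCast, pow_mul, besselCoeff]
  ring

theorem mul_deriv_besselI_div_besselI (hν : -1 < ν) {r : ℝ} (hr : 0 < r) :
    r * deriv (besselI ν) r / besselI ν r
      = ν + 2 * powerSeriesLogDeriv (besselCoeff ν) ((r / 2) ^ 2) := by
  have hsum := summable_besselCoeff_mul_pow hν
  have hr2 : 0 < r / 2 := by positivity
  have hhalf : HasDerivAt (fun x => x / 2) (1 / 2) r := (hasDerivAt_id' r).div_const 2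
  have hsq : HasDerivAt (fun x => (x / 2) ^ 2) (r / 2) r :=
    (hhalf.fun_pow 2).congr_deriv (by ring)
  have hP := (hasDerivAt_tsum_mul_pow hsum _).differentiableAt.hasDerivAt.comp r hsq
  have hI := ((hhalf.rpow_const (p := ν) (.inl hr2.ne')).mul hP).congr_of_eventuallyEq
    (eventually_of_mem (Ioi_mem_nhds hr) fun x hx => besselI_eq_rpow_mul_tsum hx)
  have hQ := mul_deriv_tsum_mul_pow hsum ((r / 2) ^ 2)
  have hPpos := tsum_mul_pow_pos hsum (besselCoeff_pos hν) (sq_nonneg (r / 2))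
  have hpow := rpow_pos_of_pos hr2 ν
  rw [hI.deriv, Function.comp_apply, besselI_eq_rpow_mul_tsum hr, powerSeriesLogDeriv, ← hQ,
    rpow_sub_one hr2.ne']
  generalize (∑' k, besselCoeff ν k * ((r / 2) ^ 2) ^ k) = P at hPpos ⊢
  generalize deriv (fun y => ∑' k, besselCoeff ν k * y ^ k) ((r / 2) ^ 2) = D
  field_simp

end Bessel

theorem besselI_log_deriv_strictMono (ν : ℝ) (hν : 0 ≤ ν) :
    StrictMonoOn (fun r : ℝ => r * deriv (besselI ν) r / besselI ν r) (Set.Ioi 0) ∧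
    Filter.Tendsto (fun r : ℝ => r * deriv (besselI ν) r / besselI ν r)
      (nhdsWithin 0 (Set.Ioi 0)) (nhds ν) ∧
    Filter.Tendsto (fun r : ℝ => r * deriv (besselI ν) r / besselI ν r)
      Filter.atTop Filter.atTop := by
  have hν' : -1 < ν := by linarith
  have hsum := summable_besselCoeff_mul_pow hν'
  have hpos := besselCoeff_pos hν'
  set L := powerSeriesLogDeriv (besselCoeff ν)
  have hL : EqOn (fun r => ν + 2 * L ((r / 2) ^ 2))
      (fun r => r * deriv (besselI ν) r / besselI ν r) (Ioi 0) :=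
    fun r hr => (mul_deriv_besselI_div_besselI hν' hr).symm
  refine ⟨StrictMonoOn.congr (fun x hx y hy hxy => ?_) hL, ?_, ?_⟩
  · have hx : 0 < x := hx
    have hsq : (x / 2) ^ 2 < (y / 2) ^ 2 := by gcongr
    linarith [strictMonoOn_powerSeriesLogDeriv hsum hpos (sq_nonneg (x / 2)) (sq_nonneg (y / 2))
      hsq]
  · have hcont : ContinuousAt (fun r => ν + 2 * L ((r / 2) ^ 2)) 0 := by
      have hL0 := continuousAt_powerSeriesLogDeriv hsum
        (tsum_mul_pow_pos hsum hpos (sq_nonneg (0 / 2))).ne'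
      fun_prop
    refine (tendsto_nhdsWithin_of_tendsto_nhds ?_).congr' (eventuallyEq_nhdsWithin_of_eqOn hL)
    simpa [L, powerSeriesLogDeriv_zero] using hcont.tendsto
  · refine Tendsto.congr' (eventuallyEq_of_mem (Ioi_mem_atTop 0) hL) ?_
    refine tendsto_atTop_add_const_left _ ν (Tendsto.const_mul_atTop two_pos ?_)
    exact (tendsto_powerSeriesLogDeriv_atTop hsum hpos).comp
      ((tendsto_pow_atTop two_ne_zero).comp (tendsto_id.atTop_div_const two_pos))
end

section
/- For each fixed r > 0, the quantity r·I_ν′(r)/I_ν(r) is strictly increasing as a function of ν ≥ 0: if 0 ≤ ν < μ then r·I_ν′(r)/I_ν(r) < r·I_μ′(r)/I_μ(r). -/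
/-!
Write `θ = x d/dx`. It acts on the series of `I_ν` termwise, multiplying the `k`-th term
by `ν + 2k`, and the Bessel equation becomes `θ² I_ν = (x² + ν²) I_ν`. Hence
`W = I_μ θI_ν - I_ν θI_μ` satisfies `x W' = (ν² - μ²) I_ν I_μ < 0` for `ν² < μ²`, so `W` is
strictly decreasing on `(0, ∞)`. For `0 ≤ ν < μ` the series also give `W(x) ≤ O(x^(ν+μ))`
as `x → 0⁺`, so `W < 0`, which is the claim because `r I_ν'(r) / I_ν(r) = θI_ν(r) / I_ν(r)`.
-/

open Real Filter Topology Set Nat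

lemma StrictAntiOn.lt_of_tendsto_nhdsGT {f g : ℝ → ℝ} {a L r : ℝ}
    (hf : StrictAntiOn f (Ioi a)) (hg : Tendsto g (𝓝[>] a) (𝓝 L))
    (hfg : ∀ᶠ x in 𝓝[>] a, f x ≤ g x) (hr : a < r) : f r < L := by
  obtain ⟨m, ham, hmr⟩ := exists_between hr
  have hmL : f m ≤ L := by
    refine ge_of_tendsto hg ?_
    filter_upwards [hfg, Ioo_mem_nhdsGT ham] with x hfgx hx
    exact (hf hx.1 ham hx.2).le.trans hfgx
  exact (hf ham (hr : r ∈ Ioi a) hmr).trans_le hmL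

lemma Real.Gamma_mul_pow_le_Gamma_add_nat {ν : ℝ} (hν : -1 < ν) (k : ℕ) :
    Gamma (ν + 1) * (ν + 1) ^ k ≤ Gamma (ν + k + 1) := by
  induction k with
  | zero => simp
  | succ k ih =>
    have hk : (0 : ℝ) < ν + k + 1 := by linarith [k.cast_nonneg (α := ℝ)]
    rw [Nat.cast_succ, show ν + (k + 1) + 1 = ν + k + 1 + 1 by ring, Gamma_add_one hk.ne',
      pow_succ, mul_comm (ν + k + 1), ← mul_assoc]
    exact mul_le_mul ih (by linarith [k.cast_nonneg (α := ℝ)]) (by linarith)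
      (Gamma_pos_of_pos hk).le

lemma abs_add_two_mul_le (ν : ℝ) (k : ℕ) : |ν + 2 * k| ≤ (|ν| + 2) * 2 ^ k := by
  have hk : (k : ℝ) < 2 ^ k := by exact_mod_cast k.lt_two_pow_self
  have h1 : (1 : ℝ) ≤ 2 ^ k := one_le_pow₀ one_le_two
  calc |ν + 2 * k| ≤ |ν| + 2 * k := by
        simpa [abs_of_nonneg (by positivity : (0 : ℝ) ≤ 2 * k)] using abs_add_le ν (2 * k)
    _ ≤ (|ν| + 2) * 2 ^ k := by nlinarith [abs_nonneg ν]

noncomputable def besselITerm (ν : ℝ) (k : ℕ) (x : ℝ) : ℝ :=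
  (x / 2) ^ (ν + 2 * (k : ℝ)) / (k ! * Gamma (ν + k + 1))

/-- `(x d/dx)ⁿ I_ν(x)`, computed termwise. -/
noncomputable def thetaBesselI (ν : ℝ) (n : ℕ) (x : ℝ) : ℝ :=
  ∑' k : ℕ, (ν + 2 * k) ^ n * besselITerm ν k x

/-- `x (I_μ I_ν' - I_ν I_μ')`, i.e. `x` times the Wronskian of `I_μ` and `I_ν`. -/
noncomputable def besselIWronskian (ν μ x : ℝ) : ℝ :=
  besselI μ x * thetaBesselI ν 1 x - besselI ν x * thetaBesselI μ 1 x

section Series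

variable {ν x y : ℝ}

lemma besselI_eq_tsum (ν x : ℝ) : besselI ν x = ∑' k, besselITerm ν k x := rfl

lemma thetaBesselI_zero (ν : ℝ) : thetaBesselI ν 0 = besselI ν := by
  ext x
  simp [thetaBesselI, besselI, besselITerm]

lemma besselITerm_pos (hν : -1 < ν) (hx : 0 < x) (k : ℕ) : 0 < besselITerm ν k x := by
  have hk : (0 : ℝ) ≤ k := k.cast_nonneg
  exact div_pos (rpow_pos_of_pos (by positivity) _)
    (mul_pos (by positivity) (Gamma_pos_of_pos (by linarith)))

lemma besselITerm_eq_mul_pow (hx : 0 < x) (k : ℕ) :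
    besselITerm ν k x = (x / 2) ^ ν * ((x / 2) ^ 2) ^ k / (k ! * Gamma (ν + k + 1)) := by
  rw [besselITerm, rpow_add (by positivity), ← pow_mul, ← rpow_natCast]
  push_cast
  ring_nf

lemma besselITerm_eq_rpow_mul {b : ℝ} (hy : 0 < y) (hb : 0 < b) (k : ℕ) :
    besselITerm ν k y = (y / b) ^ (ν + 2 * (k : ℝ)) * besselITerm ν k b := by
  rw [besselITerm, besselITerm, mul_div_assoc', ← mul_rpow (by positivity) (by positivity)]
  congr 2
  field_simp

lemma besselITerm_le_rpow_mul {b : ℝ} (hν : -1 < ν) (hy : 0 < y) (hyb : y ≤ b) (k : ℕ) :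
    besselITerm ν k y ≤ (y / b) ^ ν * besselITerm ν k b := by
  have hb : 0 < b := hy.trans_le hyb
  rw [besselITerm_eq_rpow_mul hy hb]
  refine mul_le_mul_of_nonneg_right ?_ (besselITerm_pos hν hb k).le
  exact rpow_le_rpow_of_exponent_ge (by positivity) ((div_le_one hb).2 hyb)
    (le_add_of_nonneg_right (by positivity))

lemma besselITerm_le_max_mul {a b : ℝ} (hν : -1 < ν) (ha : 0 < a) (hay : a ≤ y) (hyb : y ≤ b)
    (k : ℕ) : besselITerm ν k y ≤ max 1 ((a / b) ^ ν) * besselITerm ν k b := by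
  have hy : 0 < y := ha.trans_le hay
  have hb : 0 < b := hy.trans_le hyb
  refine (besselITerm_le_rpow_mul hν hy hyb k).trans
    (mul_le_mul_of_nonneg_right ?_ (besselITerm_pos hν hb k).le)
  rcases le_or_gt 0 ν with h | h
  · exact le_max_of_le_left (rpow_le_one (by positivity) ((div_le_one hb).2 hyb) h)
  · exact le_max_of_le_right
      (rpow_le_rpow_of_nonpos (by positivity) (div_le_div_of_nonneg_right hay hb.le) h.le)

lemma summable_thetaBesselI (hν : -1 < ν) (n : ℕ) (hx : 0 < x) :
    Summable fun k : ℕ => (ν + 2 * k) ^ n * besselITerm ν k x := by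
  have hν1 : 0 < ν + 1 := by linarith
  have hΓ : 0 < Gamma (ν + 1) := Gamma_pos_of_pos hν1
  set c := 2 ^ n * (x / 2) ^ 2 / (ν + 1)
  set A := (|ν| + 2) ^ n * (x / 2) ^ ν / Gamma (ν + 1)
  refine .of_norm_bounded ((Real.summable_pow_div_factorial c).mul_left A) fun k => ?_
  have hw : |ν + 2 * k| ^ n ≤ (|ν| + 2) ^ n * (2 ^ n) ^ k :=
    calc |ν + 2 * k| ^ n ≤ ((|ν| + 2) * 2 ^ k) ^ n :=
          pow_le_pow_left₀ (abs_nonneg _) (abs_add_two_mul_le ν k) n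
      _ = (|ν| + 2) ^ n * (2 ^ n) ^ k := by rw [mul_pow, pow_right_comm]
  have hmajorant : A * (c ^ k / k !) =
      (|ν| + 2) ^ n * (2 ^ n) ^ k * ((x / 2) ^ ν * ((x / 2) ^ 2) ^ k) /
        (k ! * (Gamma (ν + 1) * (ν + 1) ^ k)) := by
    simp only [A, c, mul_pow, div_pow]
    field_simp
  rw [norm_mul, norm_pow, Real.norm_eq_abs, Real.norm_of_nonneg (besselITerm_pos hν hx k).le,
    besselITerm_eq_mul_pow hx, hmajorant, mul_div_assoc']
  gcongr
  exact Gamma_mul_pow_le_Gamma_add_nat hν k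

lemma besselI_pos (hν : -1 < ν) (hx : 0 < x) : 0 < besselI ν x := by
  rw [← thetaBesselI_zero]
  refine (summable_thetaBesselI hν 0 hx).tsum_pos (fun k => ?_) 0 ?_
  · simpa using (besselITerm_pos hν hx k).le
  · simpa using besselITerm_pos hν hx 0

lemma thetaBesselI_nonneg (hν : 0 ≤ ν) (n : ℕ) (hy : 0 < y) : 0 ≤ thetaBesselI ν n y :=
  tsum_nonneg fun k => mul_nonneg (by positivity) (besselITerm_pos (by linarith) hy k).le

lemma thetaBesselI_le_rpow_mul (hν : 0 ≤ ν) (n : ℕ) (hy : 0 < y) (hy1 : y ≤ 1) :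
    thetaBesselI ν n y ≤ y ^ ν * thetaBesselI ν n 1 := by
  have hν' : -1 < ν := by linarith
  rw [thetaBesselI, thetaBesselI, ← tsum_mul_left]
  refine (summable_thetaBesselI hν' n hy).tsum_le_tsum (fun k => ?_)
    ((summable_thetaBesselI hν' n one_pos).mul_left _)
  rw [mul_left_comm]
  simpa using mul_le_mul_of_nonneg_left (besselITerm_le_rpow_mul hν' hy hy1 k)
    (by positivity : (0 : ℝ) ≤ (ν + 2 * k) ^ n)

lemma hasDerivAt_besselITerm (k : ℕ) (hx : 0 < x) :
    HasDerivAt (besselITerm ν k) ((ν + 2 * k) * besselITerm ν k x / x) x := by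
  have h := (((hasDerivAt_id' x).div_const 2).rpow_const (p := ν + 2 * (k : ℝ))
    (.inl (by positivity))).div_const (k ! * Gamma (ν + k + 1))
  refine h.congr_deriv ?_
  rw [besselITerm, rpow_sub_one (by positivity)]
  field_simp

lemma hasDerivAt_thetaBesselI (hν : -1 < ν) (n : ℕ) (hx : 0 < x) :
    HasDerivAt (thetaBesselI ν n) (thetaBesselI ν (n + 1) x / x) x := by
  set M := max 1 ((x / 2 / (2 * x)) ^ ν)
  have hM : 0 < M := one_pos.trans_le (le_max_left _ _)
  have hdom : ∀ k, ∀ y ∈ Ioo (x / 2) (2 * x),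
      ‖(ν + 2 * k) ^ n * ((ν + 2 * k) * besselITerm ν k y / y)‖ ≤
        2 / x * M * |(ν + 2 * k) ^ (n + 1) * besselITerm ν k (2 * x)| := by
    intro k y ⟨hxy, hyx⟩
    have hy : 0 < y := by linarith
    have hTy : besselITerm ν k y / y ≤ 2 / x * (M * besselITerm ν k (2 * x)) :=
      calc besselITerm ν k y / y ≤ M * besselITerm ν k (2 * x) / (x / 2) :=
            div_le_div₀ (mul_pos hM (besselITerm_pos hν (by positivity) k)).le
              (besselITerm_le_max_mul hν (by positivity) hxy.le hyx.le k)
              (by positivity) hxy.le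
        _ = 2 / x * (M * besselITerm ν k (2 * x)) := by field_simp
    rw [norm_mul, abs_mul, norm_pow, pow_succ, norm_div, norm_mul, Real.norm_eq_abs,
      Real.norm_of_nonneg (besselITerm_pos hν hy k).le, Real.norm_of_nonneg hy.le, abs_mul,
      abs_of_pos (besselITerm_pos hν (by positivity) k), abs_pow]
    calc |ν + 2 * k| ^ n * (|ν + 2 * k| * besselITerm ν k y / y)
        = |ν + 2 * k| ^ n * |ν + 2 * k| * (besselITerm ν k y / y) := by ring
      _ ≤ |ν + 2 * k| ^ n * |ν + 2 * k| * (2 / x * (M * besselITerm ν k (2 * x))) := by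
          gcongr
      _ = _ := by ring
  have hu : Summable fun k : ℕ =>
      2 / x * M * |(ν + 2 * k) ^ (n + 1) * besselITerm ν k (2 * x)| :=
    (summable_thetaBesselI hν (n + 1) (by positivity)).abs.mul_left _
  have h := hasDerivAt_tsum_of_isPreconnected (t := Ioo (x / 2) (2 * x)) hu isOpen_Ioo
    isPreconnected_Ioo
    (fun k y hy => (hasDerivAt_besselITerm k (by linarith [hy.1] : 0 < y)).const_mul
      ((ν + 2 * k) ^ n)) hdom (y₀ := x) ⟨by linarith, by linarith⟩
    (summable_thetaBesselI hν n hx) (y := x) ⟨by linarith, by linarith⟩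
  refine h.congr_deriv ?_
  rw [thetaBesselI, ← tsum_div_const]
  exact tsum_congr fun k => by ring

lemma mul_deriv_besselI (hν : -1 < ν) (hx : 0 < x) :
    x * deriv (besselI ν) x = thetaBesselI ν 1 x := by
  rw [← thetaBesselI_zero, (hasDerivAt_thetaBesselI hν 0 hx).deriv]
  field_simp

lemma sq_mul_besselITerm (hν : -1 < ν) (hx : 0 < x) (k : ℕ) :
    x ^ 2 * besselITerm ν k x = 4 * (k + 1) * (ν + k + 1) * besselITerm ν (k + 1) x := by
  have hk : (0 : ℝ) < ν + k + 1 := by linarith [k.cast_nonneg (α := ℝ)]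
  rw [besselITerm_eq_mul_pow hx, besselITerm_eq_mul_pow hx, factorial_succ]
  push_cast
  rw [show ν + (k + 1) + 1 = ν + k + 1 + 1 by ring, Gamma_add_one hk.ne']
  have := Gamma_pos_of_pos hk
  field_simp
  ring

/-- The modified Bessel equation. -/
lemma thetaBesselI_two (hν : -1 < ν) (hx : 0 < x) :
    thetaBesselI ν 2 x = (x ^ 2 + ν ^ 2) * besselI ν x := by
  have hI : Summable fun k => besselITerm ν k x := by
    simpa using summable_thetaBesselI hν 0 hx
  set g : ℕ → ℝ := fun k => ((ν + 2 * k) ^ 2 - ν ^ 2) * besselITerm ν k x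
  have hg : Summable g := ((summable_thetaBesselI hν 2 hx).sub (hI.mul_left (ν ^ 2))).congr
    fun k => by simp only [g]; ring
  -- the shift `k ↦ k + 1` turns `x² I_ν` into `∑ g k`, whose `k = 0` term vanishes
  have hshift : x ^ 2 * besselI ν x = ∑' k, g k := by
    rw [hg.tsum_eq_zero_add, besselI_eq_tsum, ← tsum_mul_left]
    simp only [g, Nat.cast_zero, mul_zero, add_zero, sub_self, zero_mul, zero_add]
    exact tsum_congr fun k => by rw [sq_mul_besselITerm hν hx]; push_cast; ring
  calc thetaBesselI ν 2 x = ∑' k, (g k + ν ^ 2 * besselITerm ν k x) :=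
        tsum_congr fun k => by simp only [g]; ring
    _ = (x ^ 2 + ν ^ 2) * besselI ν x := by
        rw [hg.tsum_add (hI.mul_left _), tsum_mul_left, ← hshift, besselI_eq_tsum]
        ring

end Series

section Wronskian

variable {ν μ : ℝ}

lemma hasDerivAt_besselIWronskian (hν : -1 < ν) (hμ : -1 < μ) {x : ℝ} (hx : 0 < x) :
    HasDerivAt (besselIWronskian ν μ) ((ν ^ 2 - μ ^ 2) * besselI ν x * besselI μ x / x) x := by
  have hI (ν : ℝ) (hν : -1 < ν) : HasDerivAt (besselI ν) (thetaBesselI ν 1 x / x) x := by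
    simpa [thetaBesselI_zero] using hasDerivAt_thetaBesselI hν 0 hx
  refine (((hI μ hμ).mul (hasDerivAt_thetaBesselI hν 1 hx)).sub
    ((hI ν hν).mul (hasDerivAt_thetaBesselI hμ 1 hx))).congr_deriv ?_
  rw [thetaBesselI_two hν hx, thetaBesselI_two hμ hx]
  ring

lemma strictAntiOn_besselIWronskian (hν : -1 < ν) (hμ : -1 < μ) (hνμ : ν ^ 2 < μ ^ 2) :
    StrictAntiOn (besselIWronskian ν μ) (Ioi 0) := by
  have hderiv (x : ℝ) (hx : x ∈ Ioi 0) := hasDerivAt_besselIWronskian hν hμ hx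
  refine strictAntiOn_of_hasDerivWithinAt_neg (convex_Ioi 0)
    (fun x hx => (hderiv x hx).continuousAt.continuousWithinAt)
    (fun x hx => (hderiv x (interior_subset hx)).hasDerivWithinAt) fun x hx => ?_
  rw [interior_Ioi] at hx
  have := mul_pos (besselI_pos hν hx) (besselI_pos hμ hx)
  exact div_neg_of_neg_of_pos (by nlinarith) hx

lemma besselIWronskian_le_rpow_mul (hν : 0 ≤ ν) (hμ : 0 ≤ μ) {y : ℝ} (hy : 0 < y)
    (hy1 : y ≤ 1) :
    besselIWronskian ν μ y ≤ y ^ (ν + μ) * (besselI μ 1 * thetaBesselI ν 1 1) := by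
  have hIμ := thetaBesselI_le_rpow_mul hμ 0 hy hy1
  have hθν := thetaBesselI_le_rpow_mul hν 1 hy hy1
  rw [thetaBesselI_zero] at hIμ
  have hcross : 0 ≤ besselI ν y * thetaBesselI μ 1 y :=
    mul_nonneg (besselI_pos (by linarith) hy).le (thetaBesselI_nonneg hμ 1 hy)
  calc besselIWronskian ν μ y ≤ besselI μ y * thetaBesselI ν 1 y := by
        rw [besselIWronskian]; linarith
    _ ≤ y ^ μ * besselI μ 1 * (y ^ ν * thetaBesselI ν 1 1) :=
        mul_le_mul hIμ hθν (thetaBesselI_nonneg hν 1 hy)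
          (mul_nonneg (rpow_nonneg hy.le μ) (besselI_pos (by linarith) one_pos).le)
    _ = y ^ (ν + μ) * (besselI μ 1 * thetaBesselI ν 1 1) := by
        rw [rpow_add hy]; ring

end Wronskian

theorem besselI_log_deriv_strictMono_in_order (ν μ r : ℝ) (hν : 0 ≤ ν) (hνμ : ν < μ)
    (hr : 0 < r) :
    r * deriv (besselI ν) r / besselI ν r < r * deriv (besselI μ) r / besselI μ r := by
  have hμ : 0 ≤ μ := hν.trans hνμ.le
  have hν' : -1 < ν := by linarith
  have hμ' : -1 < μ := by linarith
  have hbound : Tendsto (fun y => y ^ (ν + μ) * (besselI μ 1 * thetaBesselI ν 1 1))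
      (𝓝[>] 0) (𝓝 0) := by
    simpa using (tendsto_nhdsWithin_of_tendsto_nhds tendsto_id).rpow_const_nhds_zero
      (by linarith : 0 < ν + μ) |>.mul_const (besselI μ 1 * thetaBesselI ν 1 1)
  have hW : besselIWronskian ν μ r < 0 :=
    (strictAntiOn_besselIWronskian hν' hμ' (by nlinarith)).lt_of_tendsto_nhdsGT hbound
      (by filter_upwards [Ioc_mem_nhdsGT one_pos] with y hy
          using besselIWronskian_le_rpow_mul hν hμ hy.1 hy.2) hr
  rw [mul_deriv_besselI hν' hr, mul_deriv_besselI hμ' hr,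
    div_lt_div_iff₀ (besselI_pos hν' hr) (besselI_pos hμ' hr)]
  rw [besselIWronskian] at hW
  linarith
end

section
/- Negativity of the discriminant polynomial: fix an integer n ≥ 2, real numbers r ∈ (0,1), α ∈ [−(n+1)/n, −1), and λ ∈ [−α², 0]. Define q(λ) = 2r·((n−1)α(n+1 − rα) − 2r(2(n−1) + rα(n−1 − rα))λ + 2r³λ²). Then q(λ) < 0. -/
theorem discriminant_polynomial_negative (n : ℕ) (hn : 2 ≤ n) (r : ℝ)
    (hr : r ∈ Set.Ioo (0 : ℝ) 1) (α : ℝ)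
    (hα : α ∈ Set.Ico (-(n + 1 : ℝ) / n) (-1 : ℝ)) (lam : ℝ)
    (hlam : lam ∈ Set.Icc (-α ^ 2) (0 : ℝ)) :
    2 * r * ((n - 1) * α * (n + 1 - r * α)
      - 2 * r * (2 * (n - 1) + r * α * (n - 1 - r * α)) * lam
      + 2 * r ^ 3 * lam ^ 2) < 0 := by
  obtain ⟨hr0, hr1⟩ := hr
  obtain ⟨hα0, hα1⟩ := hα
  obtain ⟨hl1, hl2⟩ := hlam
  have hn2 : (2:ℝ) ≤ (n:ℝ) := by exact_mod_cast hn
  have h1 : (0:ℝ) < (n:ℝ) - 1 := by linarith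
  have hαneg : (0:ℝ) < -α := by linarith
  have hα2 : (0:ℝ) < α ^ 2 := by nlinarith [mul_pos hαneg hαneg]
  -- endpoint at 0
  have h0 : (n - 1 : ℝ) * α * (n + 1 - r * α) < 0 := by
    have h2 : (0:ℝ) < (n:ℝ) + 1 - r * α := by nlinarith
    nlinarith [mul_pos (mul_pos h1 h2) hαneg]
  -- endpoint at -α²
  have hend : (n - 1 : ℝ) * α * (n + 1 - r * α)
      - 2 * r * (2 * (n - 1) + r * α * (n - 1 - r * α)) * (-α ^ 2)
      + 2 * r ^ 3 * (-α ^ 2) ^ 2 < 0 := by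
    have key : (n - 1 : ℝ) * α * (n + 1 - r * α)
      - 2 * r * (2 * (n - 1) + r * α * (n - 1 - r * α)) * (-α ^ 2)
      + 2 * r ^ 3 * (-α ^ 2) ^ 2
      = (n - 1) * α * ((n : ℝ) + 1 - 9/8 + 2 * (r * α + 3/4) ^ 2) := by ring
    rw [key]
    have h2 : (0:ℝ) < (n:ℝ) + 1 - 9/8 + 2 * (r * α + 3/4) ^ 2 := by
      nlinarith [sq_nonneg (r * α + 3/4)]
    nlinarith [mul_pos (mul_pos h1 h2) hαneg]
  have hin : (n - 1 : ℝ) * α * (n + 1 - r * α)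
      - 2 * r * (2 * (n - 1) + r * α * (n - 1 - r * α)) * lam
      + 2 * r ^ 3 * lam ^ 2 < 0 := by
    rcases eq_or_lt_of_le hl2 with h | h
    · rw [h]; nlinarith
    · have t1 : 0 < (-lam) * (-((n - 1 : ℝ) * α * (n + 1 - r * α)
        - 2 * r * (2 * (n - 1) + r * α * (n - 1 - r * α)) * (-α ^ 2)
        + 2 * r ^ 3 * (-α ^ 2) ^ 2)) :=
        mul_pos (by linarith) (by linarith)
      have t2 : 0 ≤ (lam + α ^ 2) * (-((n - 1 : ℝ) * α * (n + 1 - r * α))) :=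
        mul_nonneg (by linarith) (by linarith)
      have t3 : 0 ≤ (r ^ 3 * (-lam) * (lam + α ^ 2)) * α ^ 2 :=
        mul_nonneg (mul_nonneg (mul_nonneg (by positivity) (by linarith)) (by linarith)) hα2.le
      nlinarith [t1, t2, t3, hα2]
  have := mul_neg_of_pos_of_neg (by linarith : (0:ℝ) < 2 * r) hin
  linarith [this]
end

section
/- Monotonicity of the transplanted integrand outside the ball: let n ≥ 2 and α ≤ 0, and set h(r) = C·(−α² + (n−1)(1+αr)/r²)·e^{−2α(r−1)} for r ≥ 1, where C > 0. Then h is strictly decreasing on [1,∞); indeed h′(r) = C·(2α³ − (2(n−1)/r³)·[(1+αr)² − αr/2])·e^{−2α(r−1)} < 0 for r ≥ 1. -/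
/-!
The bracket is positive for every value of `x = αr`, since
`16 ((1 + x)² - x/2) = (4x + 3)² + 7`. With `2α³ ≤ 0` and `n - 1 > 0` this makes `h'` negative
on all of `(0, ∞)`, and `h` is strictly decreasing there by the mean value theorem.
-/

open Real Set

lemma one_add_sq_sub_half_pos (x : ℝ) : 0 < (1 + x) ^ 2 - x / 2 := by
  nlinarith [sq_nonneg (4 * x + 3)]

lemma hasDerivAt_transplanted_integrand (k α C : ℝ) {r : ℝ} (hr : r ≠ 0) :
    HasDerivAt (fun r => C * (-α ^ 2 + k * (1 + α * r) / r ^ 2) * exp (-2 * α * (r - 1)))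
      (C * (2 * α ^ 3 - (2 * k / r ^ 3) * ((1 + α * r) ^ 2 - α * r / 2)) *
        exp (-2 * α * (r - 1))) r := by
  have hlin : HasDerivAt (fun r => k * (1 + α * r)) (k * α) r := by
    simpa using (((hasDerivAt_id r).const_mul α).const_add 1).const_mul k
  have hquot : HasDerivAt (fun r => -α ^ 2 + k * (1 + α * r) / r ^ 2)
      ((k * α * r ^ 2 - k * (1 + α * r) * (2 * r)) / (r ^ 2) ^ 2) r := by
    simpa using (hlin.div (hasDerivAt_pow 2 r) (pow_ne_zero 2 hr)).const_add (-α ^ 2)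
  have hexp : HasDerivAt (fun r => exp (-2 * α * (r - 1))) (exp (-2 * α * (r - 1)) * (-2 * α)) r :=
    (((hasDerivAt_id r).sub_const 1).const_mul (-2 * α)).exp.congr_deriv (by simp)
  refine ((hquot.const_mul C).mul hexp).congr_deriv ?_
  field_simp
  ring

lemma transplanted_integrand_deriv_neg {k α C r : ℝ} (hk : 0 < k) (hα : α ≤ 0) (hC : 0 < C)
    (hr : 0 < r) :
    C * (2 * α ^ 3 - (2 * k / r ^ 3) * ((1 + α * r) ^ 2 - α * r / 2)) *
      exp (-2 * α * (r - 1)) < 0 := by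
  have hcube : α ^ 3 ≤ 0 := Odd.pow_nonpos (by decide) hα
  have hbracket := one_add_sq_sub_half_pos (α * r)
  have hprod := mul_pos (by positivity : 0 < 2 * k / r ^ 3) hbracket
  have hfactor : 2 * α ^ 3 - (2 * k / r ^ 3) * ((1 + α * r) ^ 2 - α * r / 2) < 0 := by linarith
  exact mul_neg_of_neg_of_pos (mul_neg_of_pos_of_neg hC hfactor) (exp_pos _)

theorem integrand_decreasing_outside_ball (n : ℕ) (hn : 2 ≤ n) (α : ℝ) (hα : α ≤ 0)
    (C : ℝ) (hC : 0 < C)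
    (h : ℝ → ℝ)
    (hdef : ∀ r : ℝ, h r =
      C * (-α ^ 2 + (n - 1) * (1 + α * r) / r ^ 2) * Real.exp (-2 * α * (r - 1))) :
    (∀ r : ℝ, 1 ≤ r →
      deriv h r = C * (2 * α ^ 3 - (2 * (n - 1) / r ^ 3) * ((1 + α * r) ^ 2 - α * r / 2)) *
        Real.exp (-2 * α * (r - 1)) ∧ deriv h r < 0) ∧
    StrictAntiOn h (Set.Ici (1 : ℝ)) := by
  obtain rfl : h = _ := funext hdef
  have hk : (0 : ℝ) < n - 1 := by
    have : (2 : ℝ) ≤ n := by exact_mod_cast hn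
    linarith
  have hderiv (r : ℝ) (hr : 0 < r) :=
    (hasDerivAt_transplanted_integrand ((n : ℝ) - 1) α C hr.ne').deriv
  have hneg (r : ℝ) (hr : 0 < r) := transplanted_integrand_deriv_neg hk hα hC hr
  refine ⟨fun r hr => ⟨hderiv r (by linarith), hderiv r (by linarith) ▸ hneg r (by linarith)⟩, ?_⟩
  refine (strictAntiOn_of_deriv_neg (convex_Ioi 0) ?_ ?_).mono (Ici_subset_Ioi.2 one_pos)
  · exact fun r hr =>
      (hasDerivAt_transplanted_integrand _ α C hr.ne').continuousAt.continuousWithinAt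
  · rw [interior_Ioi]
    exact fun r hr => hderiv r hr ▸ hneg r hr
end
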